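/- arXiv:2308.12852 — 11 statements merged into one kernel-verified Lean document; each statement's English description precedes it below -/
import Mathlib

section
/- (Restriction to W is a surjection onto 𝔰𝔬(W, γ).) If X ∈ 𝔤 has range X ⊆ W, then its restriction to W is γ-skew: α'(X(h♯(α))) + α(X(h♯(α'))) = 0 for all α, α' ∈ V*. Conversely, for every linear map S : W → W that is γ-skew, i.e. α'(S(h♯(α))) + α(S(h♯(α'))) = 0 for all α, α' ∈ V* (where h♯(α) is regarded as an element of W, and S(w) ∈ W is regarded as an element of V), there exists X ∈ 𝔤 with range X ⊆ W and X(w) = S(w) for all w ∈ W. -/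
/-!
An endomorphism with values in `W` kills every `η`-pairing, since `W` is the radical of `η`;
so the `η`-condition of `𝔤` is automatic for it. Transporting the `h`-condition through `h♯`
turns it into exactly the `γ`-skewness of the restriction to `W = range h♯`. Hence it suffices
to extend a `γ`-skew `S : W → W` to any linear map `V → W`, which is possible over a field.
-/

/-- Membership in the Lie algebra `𝔤`. -/
def InG {V : Type*} [AddCommGroup V] [Module ℝ V]
    (η : V →ₗ[ℝ] V →ₗ[ℝ] ℝ)
    (h : Module.Dual ℝ V →ₗ[ℝ] Module.Dual ℝ V →ₗ[ℝ] ℝ)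
    (X : V →ₗ[ℝ] V) : Prop :=
  (∀ v v' : V, η (X v) v' + η v (X v') = 0) ∧
  (∀ α α' : Module.Dual ℝ V, h (α ∘ₗ X) α' + h α (α' ∘ₗ X) = 0)

section

variable {R M : Type*} [CommRing R] [AddCommGroup M] [Module R M]

theorem skew_of_range_le_ker {η : M →ₗ[R] M →ₗ[R] R} (hη_symm : ∀ v v' : M, η v v' = η v' v)
    {X : M →ₗ[R] M} (hX : LinearMap.range X ≤ LinearMap.ker η) (v v' : M) :
    η (X v) v' + η v (X v') = 0 := by
  have hker : ∀ u, η (X u) = 0 := fun u => hX ⟨u, rfl⟩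
  rw [hη_symm v, hker, hker, LinearMap.zero_apply, LinearMap.zero_apply, add_zero]

theorem dual_skew_iff_skew_on_range {h : Module.Dual R M →ₗ[R] Module.Dual R M →ₗ[R] R}
    (hh_symm : ∀ α α' : Module.Dual R M, h α α' = h α' α) {hs : Module.Dual R M →ₗ[R] M}
    (hhs : ∀ α β : Module.Dual R M, β (hs α) = h β α) (X : M →ₗ[R] M) :
    (∀ α α' : Module.Dual R M, h (α ∘ₗ X) α' + h α (α' ∘ₗ X) = 0) ↔
      ∀ α α' : Module.Dual R M, α' (X (hs α)) + α (X (hs α')) = 0 := by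
  have hsum : ∀ α α' : Module.Dual R M,
      h (α ∘ₗ X) α' + h α (α' ∘ₗ X) = α' (X (hs α)) + α (X (hs α')) := by
    intro α α'
    rw [hh_symm α, ← hhs α', ← hhs α, LinearMap.comp_apply, LinearMap.comp_apply, add_comm]
  simp only [hsum]

end

theorem Submodule.exists_range_le_extend {K V : Type*} [Field K] [AddCommGroup V] [Module K V]
    (W : Submodule K V) (S : W →ₗ[K] W) :
    ∃ X : V →ₗ[K] V, LinearMap.range X ≤ W ∧ ∀ w : W, X (w : V) = (S w : V) := by
  obtain ⟨g, hg⟩ := LinearMap.exists_extend S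
  refine ⟨W.subtype ∘ₗ g, ?_, fun w => ?_⟩
  · rintro _ ⟨v, rfl⟩
    exact (g v).2
  · rw [← hg]
    rfl

theorem restriction_onto_so_W_gamma_general
    {V : Type*} [AddCommGroup V] [Module ℝ V]
    (W : Submodule ℝ V)
    (η : V →ₗ[ℝ] V →ₗ[ℝ] ℝ)
    (hη_symm : ∀ v v' : V, η v v' = η v' v)
    (hη_rad : ∀ v : V, (∀ v' : V, η v v' = 0) ↔ v ∈ W)
    (h : Module.Dual ℝ V →ₗ[ℝ] Module.Dual ℝ V →ₗ[ℝ] ℝ)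
    (hh_symm : ∀ α α' : Module.Dual ℝ V, h α α' = h α' α)
    (hs : Module.Dual ℝ V →ₗ[ℝ] V)
    (hhs : ∀ α β : Module.Dual ℝ V, β (hs α) = h β α)
    (hs_mem : ∀ α : Module.Dual ℝ V, hs α ∈ W) :
    (∀ X : V →ₗ[ℝ] V, InG η h X → LinearMap.range X ≤ W →
      ∀ α α' : Module.Dual ℝ V, α' (X (hs α)) + α (X (hs α')) = 0) ∧
    (∀ S : W →ₗ[ℝ] W,
      (∀ α α' : Module.Dual ℝ V,
        α' (S ⟨hs α, hs_mem α⟩ : V) + α (S ⟨hs α', hs_mem α'⟩ : V) = 0) →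
      ∃ X : V →ₗ[ℝ] V, InG η h X ∧ LinearMap.range X ≤ W ∧
        ∀ w : W, X (w : V) = (S w : V)) := by
  constructor
  · rintro X ⟨-, hXh⟩ -
    exact (dual_skew_iff_skew_on_range hh_symm hhs X).mp hXh
  · intro S hS
    obtain ⟨X, hXW, hXS⟩ := W.exists_range_le_extend S
    have hW_ker : W ≤ LinearMap.ker η := fun w hw => LinearMap.ext ((hη_rad w).mpr hw)
    refine ⟨X, ⟨skew_of_range_le_ker hη_symm (hXW.trans hW_ker), ?_⟩, hXW, hXS⟩
    refine (dual_skew_iff_skew_on_range hh_symm hhs X).mpr fun α α' => ?_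
    rw [hXS ⟨hs α, hs_mem α⟩, hXS ⟨hs α', hs_mem α'⟩]
    exact hS α α'

/-- The restriction map from `{X ∈ 𝔤 : range X ⊆ W}` to `𝔰𝔬(W, γ)` is
well defined (elements restrict to `γ`-skew maps of `W`) and surjective. -/
theorem restriction_onto_so_W_gamma
    {V : Type*} [AddCommGroup V] [Module ℝ V] [FiniteDimensional ℝ V]
    (W : Submodule ℝ V)
    (η : V →ₗ[ℝ] V →ₗ[ℝ] ℝ)
    (hη_symm : ∀ v v' : V, η v v' = η v' v)
    (hη_rad : ∀ v : V, (∀ v' : V, η v v' = 0) ↔ v ∈ W)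
    (h : Module.Dual ℝ V →ₗ[ℝ] Module.Dual ℝ V →ₗ[ℝ] ℝ)
    (hh_symm : ∀ α α' : Module.Dual ℝ V, h α α' = h α' α)
    (hh_rad : ∀ α : Module.Dual ℝ V,
      (∀ α' : Module.Dual ℝ V, h α α' = 0) ↔ α ∈ W.dualAnnihilator)
    (hs : Module.Dual ℝ V →ₗ[ℝ] V)
    (hhs : ∀ α β : Module.Dual ℝ V, β (hs α) = h β α)
    (hs_mem : ∀ α : Module.Dual ℝ V, hs α ∈ W)
    (hs_surj : ∀ w : V, w ∈ W → ∃ α : Module.Dual ℝ V, hs α = w) :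
    (∀ X : V →ₗ[ℝ] V, InG η h X → LinearMap.range X ≤ W →
      ∀ α α' : Module.Dual ℝ V, α' (X (hs α)) + α (X (hs α')) = 0) ∧
    (∀ S : W →ₗ[ℝ] W,
      (∀ α α' : Module.Dual ℝ V,
        α' (S ⟨hs α, hs_mem α⟩ : V) + α (S ⟨hs α', hs_mem α'⟩ : V) = 0) →
      ∃ X : V →ₗ[ℝ] V, InG η h X ∧ LinearMap.range X ≤ W ∧
        ∀ w : W, X (w : V) = (S w : V)) :=
  restriction_onto_so_W_gamma_general W η hη_symm hη_rad h hh_symm hs hhs hs_mem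
end

section
/- (Surjectivity of {X ∈ 𝔤 : W ⊆ ker X} onto 𝔰𝔬(V/W, η̄).) For every endomorphism X₀ of V such that X₀(W) ⊆ W and η(X₀ v, v') + η(v, X₀ v') = 0 for all v, v' ∈ V, there exists X ∈ 𝔤 with W ⊆ ker X and X(v) − X₀(v) ∈ W for all v ∈ V; in other words, every η̄-skew endomorphism of the quotient V/W (where η̄ is the nondegenerate form induced by η on V/W) is induced by an element of 𝔤 vanishing on W. -/
theorem Submodule.exists_le_ker_sub_mem_of_le_comap {K V : Type*} [DivisionRing K]
    [AddCommGroup V] [Module K V] (W : Submodule K V) (X₀ : V →ₗ[K] V) (hX₀ : W ≤ W.comap X₀) :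
    ∃ X : V →ₗ[K] V, W ≤ LinearMap.ker X ∧ ∀ v, X v - X₀ v ∈ W := by
  obtain ⟨s, hs⟩ := W.mkQ.exists_rightInverse_of_surjective W.range_mkQ
  refine ⟨s ∘ₗ W.mapQ W X₀ hX₀ ∘ₗ W.mkQ, ?_, fun v => ?_⟩
  · intro w hw
    simp only [LinearMap.mem_ker, LinearMap.comp_apply, W.mkQ_apply,
      (Submodule.Quotient.mk_eq_zero W).2 hw, map_zero]
  · exact (Submodule.Quotient.eq W).1 (LinearMap.congr_fun hs _)

theorem skew_of_sub_mem_of_le_ker {R M : Type*} [CommRing R] [AddCommGroup M] [Module R M]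
    {η : M →ₗ[R] M →ₗ[R] R} (hη : ∀ v v', η v v' = η v' v) {W : Submodule R M}
    (hW : W ≤ LinearMap.ker η) {X X₀ : M →ₗ[R] M} (hX : ∀ v, X v - X₀ v ∈ W)
    (hX₀ : ∀ v v', η (X₀ v) v' + η v (X₀ v') = 0) (v v' : M) :
    η (X v) v' + η v (X v') = 0 := by
  have hclass : ∀ u, η (X u) = η (X₀ u) := fun u => LinearMap.sub_mem_ker_iff.1 (hW (hX u))
  rw [hclass, hη v, hclass, ← hη v]
  exact hX₀ v v'

theorem dual_skew_of_le_ker {R M : Type*} [CommRing R] [AddCommGroup M] [Module R M]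
    {h : Module.Dual R M →ₗ[R] Module.Dual R M →ₗ[R] R} (hh : ∀ α α', h α α' = h α' α)
    {W : Submodule R M} (hW : W.dualAnnihilator ≤ LinearMap.ker h) {X : M →ₗ[R] M}
    (hX : W ≤ LinearMap.ker X) (α α' : Module.Dual R M) :
    h (α ∘ₗ X) α' + h α (α' ∘ₗ X) = 0 := by
  have hann : ∀ β : Module.Dual R M, h (β ∘ₗ X) = 0 := fun β =>
    hW (Submodule.dualAnnihilator_anti hX (X.range_dualMap_le_dualAnnihilator_ker ⟨β, rfl⟩))
  rw [hh α, hann, hann, LinearMap.zero_apply, LinearMap.zero_apply, add_zero]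

theorem g_onto_so_quotient_general
    {V : Type*} [AddCommGroup V] [Module ℝ V]
    (W : Submodule ℝ V)
    (η : V →ₗ[ℝ] V →ₗ[ℝ] ℝ)
    (hη_symm : ∀ v v' : V, η v v' = η v' v)
    (hη_rad : ∀ v : V, (∀ v' : V, η v v' = 0) ↔ v ∈ W)
    (h : Module.Dual ℝ V →ₗ[ℝ] Module.Dual ℝ V →ₗ[ℝ] ℝ)
    (hh_symm : ∀ α α' : Module.Dual ℝ V, h α α' = h α' α)
    (hh_rad : ∀ α : Module.Dual ℝ V,
      (∀ α' : Module.Dual ℝ V, h α α' = 0) ↔ α ∈ W.dualAnnihilator)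
    (X₀ : V →ₗ[ℝ] V)
    (hX₀W : ∀ w : V, w ∈ W → X₀ w ∈ W)
    (hX₀skew : ∀ v v' : V, η (X₀ v) v' + η v (X₀ v') = 0) :
    ∃ X : V →ₗ[ℝ] V, InG η h X ∧ W ≤ LinearMap.ker X ∧
      ∀ v : V, X v - X₀ v ∈ W := by
  obtain ⟨X, hXW, hXX₀⟩ := W.exists_le_ker_sub_mem_of_le_comap X₀ hX₀W
  have hηW : W ≤ LinearMap.ker η := fun w hw => LinearMap.ext ((hη_rad w).2 hw)
  have hhW : W.dualAnnihilator ≤ LinearMap.ker h := fun α hα => LinearMap.ext ((hh_rad α).2 hα)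
  exact ⟨X, ⟨skew_of_sub_mem_of_le_ker hη_symm hηW hXX₀ hX₀skew,
    dual_skew_of_le_ker hh_symm hhW hXW⟩, hXW, hXX₀⟩

/-- Every `η̄`-skew endomorphism of `V/W` (represented by an
endomorphism `X₀` of `V` preserving `W` and infinitesimally `η`-skew) is induced
by an element of `𝔤` vanishing on `W`. -/
theorem g_onto_so_quotient
    {V : Type*} [AddCommGroup V] [Module ℝ V] [FiniteDimensional ℝ V]
    (W : Submodule ℝ V)
    (η : V →ₗ[ℝ] V →ₗ[ℝ] ℝ)
    (hη_symm : ∀ v v' : V, η v v' = η v' v)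
    (hη_rad : ∀ v : V, (∀ v' : V, η v v' = 0) ↔ v ∈ W)
    (h : Module.Dual ℝ V →ₗ[ℝ] Module.Dual ℝ V →ₗ[ℝ] ℝ)
    (hh_symm : ∀ α α' : Module.Dual ℝ V, h α α' = h α' α)
    (hh_rad : ∀ α : Module.Dual ℝ V,
      (∀ α' : Module.Dual ℝ V, h α α' = 0) ↔ α ∈ W.dualAnnihilator)
    (X₀ : V →ₗ[ℝ] V)
    (hX₀W : ∀ w : V, w ∈ W → X₀ w ∈ W)
    (hX₀skew : ∀ v v' : V, η (X₀ v) v' + η v (X₀ v') = 0) :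
    ∃ X : V →ₗ[ℝ] V, InG η h X ∧ W ≤ LinearMap.ker X ∧
      ∀ v : V, X v - X₀ v ∈ W :=
  g_onto_so_quotient_general W η hη_symm hη_rad h hh_symm hh_rad X₀ hX₀W hX₀skew
end

section
/- If X ∈ 𝔤 and Y ∈ End(V) satisfies range Y ⊆ W and W ⊆ ker Y, then the commutator [X, Y] = X∘Y − Y∘X also satisfies range [X, Y] ⊆ W and W ⊆ ker [X, Y]. (The boosts W ⊗ ann W form an ideal of 𝔤.) -/
/-- The boosts `W ⊗ ann W` form an ideal of `𝔤`: if `X ∈ 𝔤` and `Y` has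
range in `W` and vanishes on `W`, then so does the commutator `[X, Y]`. -/
theorem boosts_ideal_of_g
    {V : Type*} [AddCommGroup V] [Module ℝ V] [FiniteDimensional ℝ V]
    (W : Submodule ℝ V)
    (η : V →ₗ[ℝ] V →ₗ[ℝ] ℝ)
    (hη_symm : ∀ v v' : V, η v v' = η v' v)
    (hη_rad : ∀ v : V, (∀ v' : V, η v v' = 0) ↔ v ∈ W)
    (h : Module.Dual ℝ V →ₗ[ℝ] Module.Dual ℝ V →ₗ[ℝ] ℝ)
    (hh_symm : ∀ α α' : Module.Dual ℝ V, h α α' = h α' α)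
    (hh_rad : ∀ α : Module.Dual ℝ V,
      (∀ α' : Module.Dual ℝ V, h α α' = 0) ↔ α ∈ W.dualAnnihilator)
    (X Y : V →ₗ[ℝ] V)
    (hXη : ∀ v v' : V, η (X v) v' + η v (X v') = 0)
    (hXh : ∀ α α' : Module.Dual ℝ V, h (α ∘ₗ X) α' + h α (α' ∘ₗ X) = 0)
    (hYrange : LinearMap.range Y ≤ W)
    (hYker : W ≤ LinearMap.ker Y) :
    LinearMap.range (X ∘ₗ Y - Y ∘ₗ X) ≤ W ∧
    W ≤ LinearMap.ker (X ∘ₗ Y - Y ∘ₗ X) := by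
  -- X preserves W, since W is the radical of η and X is η-skew.
  have hXW : ∀ w ∈ W, X w ∈ W := by
    intro w hw
    rw [← hη_rad]
    intro v'
    have h1 : η (X w) v' + η w (X v') = 0 := hXη w v'
    have h2 : η w (X v') = 0 := (hη_rad w).mpr hw (X v')
    linarith
  constructor
  · rintro _ ⟨v, rfl⟩
    simp only [LinearMap.sub_apply, LinearMap.comp_apply]
    exact W.sub_mem (hXW _ (hYrange ⟨v, rfl⟩)) (hYrange ⟨X v, rfl⟩)
  · intro w hw
    simp only [LinearMap.mem_ker, LinearMap.sub_apply, LinearMap.comp_apply]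
    have h1 : Y w = 0 := hYker hw
    have h2 : Y (X w) = 0 := hYker (hXW w hw)
    rw [h1, h2, map_zero, sub_zero]
end

section
/- Every X ∈ 𝔤 can be decomposed as X = Y + Z where Y, Z ∈ 𝔤, the range of Y is contained in W, and Z vanishes on W (W ⊆ ker Z). In other words, 𝔤 = (𝔤 ∩ {X : range X ⊆ W}) + (𝔤 ∩ {X : W ⊆ ker X}). -/
namespace LinearMap

variable {R M N : Type*} [CommRing R] [AddCommGroup M] [Module R M] [AddCommGroup N] [Module R N]
  {B : M →ₗ[R] M →ₗ[R] N} {f g : Module.End R M}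

theorem isSkewAdjoint_iff_add_eq_zero :
    B.IsSkewAdjoint f ↔ ∀ x y, B (f x) y + B x (f y) = 0 := by
  simp only [IsSkewAdjoint, IsAdjointPair, Pi.neg_apply, map_neg, add_eq_zero_iff_eq_neg]

theorem IsSkewAdjoint.sub (hf : B.IsSkewAdjoint f) (hg : B.IsSkewAdjoint g) :
    B.IsSkewAdjoint ⇑(f - g) := by
  rw [isSkewAdjoint_iff_add_eq_zero] at *
  intro x y
  simp only [sub_apply, map_sub]
  rw [sub_add_sub_comm, hf x y, hg x y, sub_zero]

theorem isSkewAdjoint_of_range_le_ker (hB : ∀ x y, B x y = B y x) (hf : range f ≤ ker B) :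
    B.IsSkewAdjoint f := by
  rw [isSkewAdjoint_iff_add_eq_zero]
  intro x y
  rw [hB x, hf ⟨x, rfl⟩, hf ⟨y, rfl⟩, zero_apply, zero_apply, add_zero]

theorem ker_le_comap_ker_of_isSkewAdjoint (hf : B.IsSkewAdjoint f) :
    ker B ≤ (ker B).comap f := by
  intro x hx
  ext y
  rw [zero_apply, hf x y, mem_ker.1 hx, zero_apply]

theorem ker_eq_of_forall_apply_eq_zero_iff {S : Submodule R M}
    (hS : ∀ x, (∀ y, B x y = 0) ↔ x ∈ S) : ker B = S := by
  ext x
  rw [mem_ker, ← hS, LinearMap.ext_iff]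
  rfl

end LinearMap

open LinearMap Submodule

theorem inG_iff {V : Type*} [AddCommGroup V] [Module ℝ V] {η : V →ₗ[ℝ] V →ₗ[ℝ] ℝ}
    {h : Module.Dual ℝ V →ₗ[ℝ] Module.Dual ℝ V →ₗ[ℝ] ℝ} {X : Module.End ℝ V} :
    InG η h X ↔ η.IsSkewAdjoint X ∧ h.IsSkewAdjoint X.dualMap := by
  simp only [isSkewAdjoint_iff_add_eq_zero, InG, dualMap_apply']

theorem g_decomposition_general
    {V : Type*} [AddCommGroup V] [Module ℝ V]
    (W : Submodule ℝ V)
    (η : V →ₗ[ℝ] V →ₗ[ℝ] ℝ)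
    (hη_symm : ∀ v v' : V, η v v' = η v' v)
    (hη_rad : ∀ v : V, (∀ v' : V, η v v' = 0) ↔ v ∈ W)
    (h : Module.Dual ℝ V →ₗ[ℝ] Module.Dual ℝ V →ₗ[ℝ] ℝ)
    (hh_symm : ∀ α α' : Module.Dual ℝ V, h α α' = h α' α)
    (hh_rad : ∀ α : Module.Dual ℝ V,
      (∀ α' : Module.Dual ℝ V, h α α' = 0) ↔ α ∈ W.dualAnnihilator)
    (X : V →ₗ[ℝ] V) (hX : InG η h X) :
    ∃ Y Z : V →ₗ[ℝ] V, InG η h Y ∧ InG η h Z ∧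
      LinearMap.range Y ≤ W ∧ W ≤ LinearMap.ker Z ∧ X = Y + Z := by
  have hη_ker : ker η = W := ker_eq_of_forall_apply_eq_zero_iff hη_rad
  have hh_ker : ker h = W.dualAnnihilator := ker_eq_of_forall_apply_eq_zero_iff hh_rad
  obtain ⟨hXη, hXh⟩ := inG_iff.1 hX
  obtain ⟨U, hU⟩ := W.exists_isCompl
  set Y := X ∘ₗ W.projection U hU
  set Z := X - Y
  have hY_range : range Y ≤ W := by
    rw [range_comp, range_projection, map_le_iff_le_comap, ← hη_ker]
    exact ker_le_comap_ker_of_isSkewAdjoint hXη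
  have hZ_ker : W ≤ ker Z := fun w hw => by
    simp [Z, Y, projection_apply_of_mem_left hU hw]
  have hYη : η.IsSkewAdjoint Y := isSkewAdjoint_of_range_le_ker hη_symm (hη_ker ▸ hY_range)
  have hZh : h.IsSkewAdjoint Z.dualMap := isSkewAdjoint_of_range_le_ker hh_symm <|
    hh_ker ▸ Z.range_dualMap_le_dualAnnihilator_ker.trans (dualAnnihilator_anti hZ_ker)
  have hY_dual : Y.dualMap = X.dualMap - Z.dualMap := by ext; simp [Z]
  refine ⟨Y, Z, inG_iff.2 ⟨hYη, hY_dual ▸ hXh.sub hZh⟩, inG_iff.2 ⟨hXη.sub hYη, hZh⟩, hY_range,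
    hZ_ker, (add_sub_cancel Y X).symm⟩

/-- `𝔤 = (𝔤 ∩ {range ⊆ W}) + (𝔤 ∩ {W ⊆ ker})`: every `X ∈ 𝔤` splits as
`X = Y + Z` with `Y, Z ∈ 𝔤`, `range Y ⊆ W` and `W ⊆ ker Z`. -/
theorem g_decomposition
    {V : Type*} [AddCommGroup V] [Module ℝ V] [FiniteDimensional ℝ V]
    (W : Submodule ℝ V)
    (η : V →ₗ[ℝ] V →ₗ[ℝ] ℝ)
    (hη_symm : ∀ v v' : V, η v v' = η v' v)
    (hη_rad : ∀ v : V, (∀ v' : V, η v v' = 0) ↔ v ∈ W)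
    (h : Module.Dual ℝ V →ₗ[ℝ] Module.Dual ℝ V →ₗ[ℝ] ℝ)
    (hh_symm : ∀ α α' : Module.Dual ℝ V, h α α' = h α' α)
    (hh_rad : ∀ α : Module.Dual ℝ V,
      (∀ α' : Module.Dual ℝ V, h α α' = 0) ↔ α ∈ W.dualAnnihilator)
    (X : V →ₗ[ℝ] V) (hX : InG η h X) :
    ∃ Y Z : V →ₗ[ℝ] V, InG η h Y ∧ InG η h Z ∧
      LinearMap.range Y ≤ W ∧ W ≤ LinearMap.ker Z ∧ X = Y + Z :=
  g_decomposition_general W η hη_symm hη_rad h hh_symm hh_rad X hX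
end

section
/- (Kernel of the Spencer differential.) Let κ : V → End(V) be a linear map with κ(v) ∈ 𝔤 for all v ∈ V, and suppose ∂κ = 0, i.e. κ(v)v' = κ(v')v for all v, v' ∈ V. Then κ(v)v' ∈ W for all v, v' ∈ V, and κ(w)w' = 0 for all w, w' ∈ W. Consequently, for 𝔤-valued linear maps κ, one has ∂κ = 0 if and only if κ(w)w' = 0 for all w, w' ∈ W and κ(v)v' = κ(v')v ∈ W for all v, v' ∈ V. -/
/-- For a `𝔤`-valued linear map `κ : V → 𝔤 ⊆ End(V)` with `∂κ = 0`,
one has `κ(v)v' ∈ W` for all `v, v'` and `κ(w)w' = 0` for `w, w' ∈ W`; consequently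
`∂κ = 0` iff `κ(w)w' = 0` on `W` and `κ(v)v' = κ(v')v ∈ W` on `V`. -/
theorem spencer_kernel_characterisation
    {V : Type*} [AddCommGroup V] [Module ℝ V] [FiniteDimensional ℝ V]
    (W : Submodule ℝ V)
    (η : V →ₗ[ℝ] V →ₗ[ℝ] ℝ)
    (hη_symm : ∀ v v' : V, η v v' = η v' v)
    (hη_rad : ∀ v : V, (∀ v' : V, η v v' = 0) ↔ v ∈ W)
    (h : Module.Dual ℝ V →ₗ[ℝ] Module.Dual ℝ V →ₗ[ℝ] ℝ)
    (hh_symm : ∀ α α' : Module.Dual ℝ V, h α α' = h α' α)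
    (hh_rad : ∀ α : Module.Dual ℝ V,
      (∀ α' : Module.Dual ℝ V, h α α' = 0) ↔ α ∈ W.dualAnnihilator)
    (κ : V →ₗ[ℝ] V →ₗ[ℝ] V)
    (hκg : ∀ v : V, InG η h (κ v)) :
    ((∀ v v' : V, κ v v' = κ v' v) →
      (∀ v v' : V, κ v v' ∈ W) ∧
      (∀ w : V, w ∈ W → ∀ w' : V, w' ∈ W → κ w w' = 0)) ∧
    ((∀ v v' : V, κ v v' = κ v' v) ↔
      ((∀ w : V, w ∈ W → ∀ w' : V, w' ∈ W → κ w w' = 0) ∧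
        (∀ v v' : V, κ v v' = κ v' v ∧ κ v v' ∈ W))) := by
  classical
  -- Main claim assuming symmetry of κ
  have main : (∀ v v' : V, κ v v' = κ v' v) →
      (∀ v v' : V, κ v v' ∈ W) ∧
      (∀ w : V, w ∈ W → ∀ w' : V, w' ∈ W → κ w w' = 0) := by
    intro hsym
    -- Claim 1: κ v v' ∈ W
    have memW : ∀ v v' : V, κ v v' ∈ W := by
      intro u v
      rw [← hη_rad]
      intro w
      have key : η (κ u v) w = - η (κ u v) w := by
        calc η (κ u v) w = η (κ v u) w := by rw [hsym u v]
          _ = - η u (κ v w) := by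
              have := (hκg v).1 u w; linarith
          _ = - η (κ v w) u := by rw [hη_symm u (κ v w)]
          _ = - η (κ w v) u := by rw [hsym v w]
          _ = η v (κ w u) := by
              have := (hκg w).1 v u; linarith
          _ = η (κ w u) v := by rw [hη_symm]
          _ = η (κ u w) v := by rw [hsym w u]
          _ = - η w (κ u v) := by
              have := (hκg u).1 w v; linarith
          _ = - η (κ u v) w := by rw [hη_symm]
      linarith
    -- The map ĥ : V* → V induced by h
    set hhat : Module.Dual ℝ V →ₗ[ℝ] V :=
      (Module.evalEquiv ℝ V).symm.toLinearMap ∘ₗ h with hhat_def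
    have hhat_eval : ∀ (α β : Module.Dual ℝ V), β (hhat α) = h α β := by
      intro α β
      simp [hhat_def]
    -- ĥ α = 0 iff α ∈ ann W
    have hhat_ker : ∀ α : Module.Dual ℝ V, hhat α = 0 ↔ α ∈ W.dualAnnihilator := by
      intro α
      rw [← hh_rad]
      constructor
      · intro h0 β; rw [← hhat_eval, h0, map_zero]
      · intro h0
        rw [← Module.forall_dual_apply_eq_zero_iff ℝ (hhat α)]
        intro β; rw [hhat_eval]; exact h0 β
    -- range ĥ ≤ W
    have hhat_range_le : LinearMap.range hhat ≤ W := by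
      rintro x ⟨α, rfl⟩
      rw [← Subspace.forall_mem_dualAnnihilator_apply_eq_zero_iff W]
      intro β hβ
      rw [hhat_eval, hh_symm]
      exact (hh_rad β).mpr hβ α
    -- range ĥ = W (dimension count)
    have hker : LinearMap.ker hhat = W.dualAnnihilator := by
      ext α; rw [LinearMap.mem_ker]; exact hhat_ker α
    have hrange : LinearMap.range hhat = W := by
      refine Submodule.eq_of_le_of_finrank_le hhat_range_le ?_
      have e1 := LinearMap.finrank_range_add_finrank_ker hhat
      rw [hker] at e1
      have e2 : Module.finrank ℝ W.dualAnnihilator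
          = Module.finrank ℝ (Module.Dual ℝ (V ⧸ W)) :=
        (LinearEquiv.finrank_eq (Submodule.dualQuotEquivDualAnnihilator W)).symm
      have e2' : Module.finrank ℝ (Module.Dual ℝ (V ⧸ W))
          = Module.finrank ℝ (V ⧸ W) := Subspace.dual_finrank_eq
      have e3 := Submodule.finrank_quotient_add_finrank W
      have e4 : Module.finrank ℝ (Module.Dual ℝ V) = Module.finrank ℝ V :=
        Subspace.dual_finrank_eq
      omega
    -- key identity : ĥ (α ∘ κ v) = - κ v (ĥ α)
    have key : ∀ (α : Module.Dual ℝ V) (v : V),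
        hhat (α ∘ₗ κ v) = - κ v (hhat α) := by
      intro α v
      rw [← sub_eq_zero, ← Module.forall_dual_apply_eq_zero_iff ℝ]
      intro β
      have h1 : h (α ∘ₗ κ v) β = - h α (β ∘ₗ κ v) := by
        have := (hκg v).2 α β; linarith
      have h2 : h α (β ∘ₗ κ v) = β (κ v (hhat α)) := by
        rw [← hhat_eval]; rfl
      simp only [map_sub, map_neg, sub_eq_zero, hhat_eval, h1, h2]
    -- κ (ĥα) (ĥβ) = 0
    have zero_on_range : ∀ (α β : Module.Dual ℝ V), κ (hhat α) (hhat β) = 0 := by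
      intro α β
      -- T α β γ := h (β ∘ κ(ĥα)) γ = - γ (κ (ĥα) (ĥβ))
      have Tval : ∀ (α β γ : Module.Dual ℝ V),
          h (β ∘ₗ κ (hhat α)) γ = - γ (κ (hhat α) (hhat β)) := by
        intro α β γ
        rw [← hhat_eval, key]
        simp
      have Tsym : ∀ (α β γ : Module.Dual ℝ V),
          h (β ∘ₗ κ (hhat α)) γ = h (α ∘ₗ κ (hhat β)) γ := by
        intro α β γ
        rw [Tval, Tval, hsym]
      have Tskew : ∀ (α β γ : Module.Dual ℝ V),
          h (β ∘ₗ κ (hhat α)) γ = - h (γ ∘ₗ κ (hhat α)) β := by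
        intro α β γ
        have := (hκg (hhat α)).2 γ β
        rw [hh_symm (β ∘ₗ κ (hhat α)) γ] at *
        linarith
      have Tzero : ∀ (α β γ : Module.Dual ℝ V),
          h (β ∘ₗ κ (hhat α)) γ = 0 := by
        intro α β γ
        have : h (β ∘ₗ κ (hhat α)) γ = - h (β ∘ₗ κ (hhat α)) γ := by
          calc h (β ∘ₗ κ (hhat α)) γ
              = h (α ∘ₗ κ (hhat β)) γ := Tsym α β γ
            _ = - h (γ ∘ₗ κ (hhat β)) α := Tskew β α γ
            _ = - h (β ∘ₗ κ (hhat γ)) α := by rw [Tsym γ β α]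
            _ = h (α ∘ₗ κ (hhat γ)) β := by rw [Tskew γ β α, neg_neg]
            _ = h (γ ∘ₗ κ (hhat α)) β := Tsym γ α β
            _ = - h (β ∘ₗ κ (hhat α)) γ := by rw [Tskew α γ β]
        linarith
      rw [← Module.forall_dual_apply_eq_zero_iff ℝ]
      intro γ
      have := Tzero α β γ
      rw [Tval] at this
      linarith
    refine ⟨memW, ?_⟩
    intro w hw w' hw'
    obtain ⟨α, hα⟩ : w ∈ LinearMap.range hhat := by rw [hrange]; exact hw
    obtain ⟨β, hβ⟩ : w' ∈ LinearMap.range hhat := by rw [hrange]; exact hw'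
    rw [← hα, ← hβ]
    exact zero_on_range α β
  refine ⟨main, ?_⟩
  constructor
  · intro hsym
    obtain ⟨h1, h2⟩ := main hsym
    exact ⟨h2, fun v v' => ⟨hsym v v', h1 v v'⟩⟩
  · rintro ⟨-, h2⟩ v v'
    exact (h2 v v').1
end

section
/- (Surjectivity of the Spencer differential onto W-valued torsions annihilating W.) Let T : V × V → V be an alternating bilinear map such that T(v, v') ∈ W for all v, v' ∈ V and T(v, w) = 0 for all v ∈ V and w ∈ W. Then there exists a linear map κ : V → End(V) with κ(w) = 0 for all w ∈ W, κ(v)(w) = 0 for all v ∈ V and w ∈ W, κ(v)(v') ∈ W for all v, v' ∈ V, and ∂κ = T; moreover each κ(v) belongs to 𝔤. -/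
/-- Every alternating bilinear `T : V × V → V` with values in `W` and
annihilating `W` is in the image of the Spencer differential, via some `𝔤`-valued
`κ` vanishing on `W`, with `κ(v)W = 0` and `κ(v)v' ∈ W`. -/
theorem spencer_surjective_onto_W_torsions
    {V : Type*} [AddCommGroup V] [Module ℝ V] [FiniteDimensional ℝ V]
    (W : Submodule ℝ V)
    (η : V →ₗ[ℝ] V →ₗ[ℝ] ℝ)
    (hη_symm : ∀ v v' : V, η v v' = η v' v)
    (hη_rad : ∀ v : V, (∀ v' : V, η v v' = 0) ↔ v ∈ W)
    (h : Module.Dual ℝ V →ₗ[ℝ] Module.Dual ℝ V →ₗ[ℝ] ℝ)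
    (hh_symm : ∀ α α' : Module.Dual ℝ V, h α α' = h α' α)
    (hh_rad : ∀ α : Module.Dual ℝ V,
      (∀ α' : Module.Dual ℝ V, h α α' = 0) ↔ α ∈ W.dualAnnihilator)
    (T : V →ₗ[ℝ] V →ₗ[ℝ] V)
    (hTalt : ∀ v : V, T v v = 0)
    (hTW : ∀ v v' : V, T v v' ∈ W)
    (hTann : ∀ v : V, ∀ w : V, w ∈ W → T v w = 0) :
    ∃ κ : V →ₗ[ℝ] V →ₗ[ℝ] V,
      (∀ w : V, w ∈ W → κ w = 0) ∧
      (∀ v : V, ∀ w : V, w ∈ W → κ v w = 0) ∧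
      (∀ v v' : V, κ v v' ∈ W) ∧
      (∀ v v' : V, κ v v' - κ v' v = T v v') ∧
      (∀ v : V, InG η h (κ v)) := by
  have hskew : ∀ v v' : V, T v' v = - T v v' := by
    intro v v'
    have h0 := hTalt (v + v')
    simp only [map_add, LinearMap.add_apply, hTalt] at h0
    have : T v v' + T v' v = 0 := by
      have := h0
      abel_nf at this ⊢
      linear_combination (norm := abel_nf) this
    linear_combination (norm := abel_nf) this
  refine ⟨(1/2 : ℝ) • T, ?_, ?_, ?_, ?_, ?_⟩
  · intro w hw
    ext v
    simp only [LinearMap.smul_apply, LinearMap.zero_apply, smul_eq_mul]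
    rw [hskew v w, hTann v w hw]
    simp
  · intro v w hw
    simp [hTann v w hw]
  · intro v v'
    simpa using W.smul_mem (1/2 : ℝ) (hTW v v')
  · intro v v'
    simp only [LinearMap.smul_apply]
    rw [hskew v' v]
    module
  · intro v
    constructor
    · intro u u'
      have h1 : η (((1/2 : ℝ) • T) v u) u' = 0 := by
        have hm : ((1/2 : ℝ) • T) v u ∈ W := by
          simpa using W.smul_mem (1/2 : ℝ) (hTW v u)
        exact (hη_rad _).mpr hm u'
      have h2 : η u (((1/2 : ℝ) • T) v u') = 0 := by
        rw [hη_symm]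
        have hm : ((1/2 : ℝ) • T) v u' ∈ W := by
          simpa using W.smul_mem (1/2 : ℝ) (hTW v u')
        exact (hη_rad _).mpr hm u
      rw [h1, h2, add_zero]
    · intro α α'
      have hann : ∀ β : Module.Dual ℝ V, (β ∘ₗ (((1/2 : ℝ) • T) v)) ∈ W.dualAnnihilator := by
        intro β
        rw [Submodule.mem_dualAnnihilator]
        intro w hw
        simp [hTann v w hw]
      have h1 : h (α ∘ₗ (((1/2 : ℝ) • T) v)) α' = 0 := (hh_rad _).mpr (hann α) α'
      have h2 : h α (α' ∘ₗ (((1/2 : ℝ) • T) v)) = 0 := by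
        rw [hh_symm]; exact (hh_rad _).mpr (hann α') α
      rw [h1, h2, add_zero]
end

section
/- For every alternating bilinear map T : V × V → V and every v ∈ V, the endomorphism v' ↦ φ_T(v, v') of V belongs to 𝔤. Consequently the linear map κ : v ↦ (v' ↦ φ_T(v, v')) is 𝔤-valued and lies in the kernel of the Spencer differential, i.e. κ(v)v' = κ(v')v for all v, v' ∈ V. -/
/-- For every alternating bilinear `T` and every `v`, the endomorphism
`v' ↦ φ_T(v, v')` belongs to `𝔤`; hence `v ↦ φ_T(v, ·)` is `𝔤`-valued and lies in
the kernel of the Spencer differential: `φ_T(v, v') = φ_T(v', v)`. -/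
theorem phi_valued_in_ker_spencer
    {V : Type*} [AddCommGroup V] [Module ℝ V] [FiniteDimensional ℝ V]
    (W : Submodule ℝ V)
    (η : V →ₗ[ℝ] V →ₗ[ℝ] ℝ)
    (hη_symm : ∀ v v' : V, η v v' = η v' v)
    (hη_rad : ∀ v : V, (∀ v' : V, η v v' = 0) ↔ v ∈ W)
    (h : Module.Dual ℝ V →ₗ[ℝ] Module.Dual ℝ V →ₗ[ℝ] ℝ)
    (hh_symm : ∀ α α' : Module.Dual ℝ V, h α α' = h α' α)
    (hh_rad : ∀ α : Module.Dual ℝ V,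
      (∀ α' : Module.Dual ℝ V, h α α' = 0) ↔ α ∈ W.dualAnnihilator)
    (hs : Module.Dual ℝ V →ₗ[ℝ] V)
    (hhs : ∀ α β : Module.Dual ℝ V, β (hs α) = h β α)
    (T : V →ₗ[ℝ] V →ₗ[ℝ] V)
    (hTalt : ∀ v : V, T v v = 0)
    (φ : V → V → V)
    (hφ : ∀ v v' : V, ∀ α : Module.Dual ℝ V,
      α (φ v v') = η (T v (hs α)) v' + η (T v' (hs α)) v) :
    (∀ v : V, ∃ X : V →ₗ[ℝ] V, (∀ v' : V, X v' = φ v v') ∧ InG η h X) ∧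
    (∀ v v' : V, φ v v' = φ v' v) := by
  classical
  have sep : ∀ a b : V, (∀ α : Module.Dual ℝ V, α a = α b) → a = b := by
    intro a b hab
    have h0 : ∀ α : Module.Dual ℝ V, α (a - b) = 0 := by
      intro α; simp [map_sub, hab α]
    exact sub_eq_zero.mp ((Module.forall_dual_apply_eq_zero_iff ℝ (a - b)).mp h0)
  have hηW : ∀ w ∈ W, ∀ u : V, η w u = 0 := fun w hw => (hη_rad w).mpr hw
  have heta_ann : ∀ u : V, η u ∈ W.dualAnnihilator := by
    intro u
    rw [Submodule.mem_dualAnnihilator]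
    intro w hw
    exact (hη_symm u w).trans (hηW w hw u)
  have hEta0 : ∀ (u : V) (α' : Module.Dual ℝ V), h (η u) α' = 0 :=
    fun u α' => (hh_rad (η u)).mpr (heta_ann u) α'
  have hs_eta : ∀ u : V, hs (η u) = 0 := by
    intro u
    apply (Module.forall_dual_apply_eq_zero_iff ℝ _).mp
    intro β
    rw [hhs (η u) β, hh_symm]
    exact hEta0 u β
  have eta_phi : ∀ v v' v'' : V, η v'' (φ v v') = 0 := by
    intro v v' v''
    have := hφ v v' (η v'')
    rw [hs_eta] at this
    simpa using this
  have hTanti : ∀ a b : V, T a b = - T b a := by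
    intro a b
    have h1 : T a b + T b a = 0 := by
      have := hTalt (a + b)
      have h2 : T b a + T a b = 0 := by simpa [map_add, LinearMap.add_apply, hTalt] using this
      rw [add_comm]; exact h2
    exact eq_neg_of_add_eq_zero_left h1
  constructor
  · intro v
    obtain ⟨X, hX⟩ : ∃ X : V →ₗ[ℝ] V, ∀ v', X v' = φ v v' := by
      refine ⟨{ toFun := φ v, map_add' := ?_, map_smul' := ?_ }, fun v' => rfl⟩
      · intro x y
        apply sep
        intro α
        simp only [map_add, LinearMap.add_apply, hφ]
        ring
      · intro c x
        apply sep
        intro α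
        simp only [map_smul, hφ, smul_eq_mul, RingHom.id_apply, LinearMap.smul_apply,
          LinearMap.map_smulₛₗ]
        ring
    refine ⟨X, hX, ?_, ?_⟩
    · intro a b
      have h1 : η (φ v a) b = 0 := (hη_symm (φ v a) b).trans (eta_phi v a b)
      have h2 : η a (φ v b) = 0 := eta_phi v b a
      rw [hX, hX]
      simp only [h1, h2, add_zero]
    · intro α α'
      have hcomp : ∀ γ : Module.Dual ℝ V,
          (γ ∘ₗ X : Module.Dual ℝ V)
            = η (T v (hs γ)) + (η.flip v ∘ₗ T.flip (hs γ)) := by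
        intro γ
        ext w
        simp only [LinearMap.comp_apply, LinearMap.add_apply, LinearMap.flip_apply, hX]
        exact hφ v w γ
      rw [hcomp α, hcomp α']
      simp only [map_add, LinearMap.add_apply]
      rw [hEta0, hh_symm α (η ((T v) (hs α'))), hEta0,
        hh_symm α (η.flip v ∘ₗ T.flip (hs α')),
        ← hhs α' (η.flip v ∘ₗ T.flip (hs α)),
        ← hhs α (η.flip v ∘ₗ T.flip (hs α'))]
      simp only [LinearMap.comp_apply, LinearMap.flip_apply]
      rw [hTanti (hs α') (hs α)]
      simp
  · intro v v'
    apply sep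
    intro α
    rw [hφ, hφ]
    ring
end

section
/- (im φ = ker ∂.) For every linear map κ : V → End(V) with κ(v) ∈ 𝔤 for all v ∈ V and κ(v)v' = κ(v')v for all v, v' ∈ V (i.e. ∂κ = 0), there exists an alternating bilinear map T : V × V → V such that φ_T(v, v') = κ(v)v' for all v, v' ∈ V. -/
open Module

theorem eq_zero_of_symm_of_antisymm {X M : Type*} [AddCommGroup M] [IsAddTorsionFree M]
    (f : X → X → X → M) (hsymm : ∀ a b c, f a b c = f b a c)
    (hanti : ∀ a b c, f a b c = -f a c b) (a b c : X) : f a b c = 0 := by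
  refine self_eq_neg.mp ?_
  calc f a b c = -f a c b := hanti a b c
    _ = -f c a b := by rw [hsymm]
    _ = f c b a := by rw [hanti, neg_neg]
    _ = f b c a := hsymm c b a
    _ = -f b a c := hanti b c a
    _ = -f a b c := by rw [hsymm]

theorem LinearMap.exists_rightInverseOn_range {K E F : Type*} [DivisionRing K]
    [AddCommGroup E] [Module K E] [AddCommGroup F] [Module K F] (f : E →ₗ[K] F) :
    ∃ g : F →ₗ[K] E, ∀ y ∈ LinearMap.range f, f (g y) = y := by
  obtain ⟨g₀, hg₀⟩ := f.rangeRestrict.exists_rightInverse_of_surjective f.range_rangeRestrict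
  obtain ⟨g, hg⟩ := LinearMap.exists_extend g₀
  refine ⟨g, fun y hy => ?_⟩
  have hgy : g y = g₀ ⟨y, hy⟩ := LinearMap.congr_fun hg ⟨y, hy⟩
  simpa [hgy] using congr_arg Subtype.val (LinearMap.congr_fun hg₀ ⟨y, hy⟩)

section

variable {K V : Type*} [Field K] [AddCommGroup V] [Module K V]

theorem apply_apply_eq_zero_of_skew [CharZero K] (B : V →ₗ[K] V →ₗ[K] K)
    (hB : ∀ v v', B v v' = B v' v)
    (κ : V →ₗ[K] V →ₗ[K] V) (hκ : ∀ v v', κ v v' = κ v' v)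
    (hskew : ∀ x v v', B (κ x v) v' + B v (κ x v') = 0) (v v' v'' : V) :
    B (κ v v') v'' = 0 :=
  eq_zero_of_symm_of_antisymm (fun a b c => B (κ a b) c) (fun a b c => by rw [hκ])
    (fun a b c => eq_neg_of_add_eq_zero_left (by rw [hB (κ a c)]; exact hskew a b c)) v v' v''

theorem apply_sharp_apply_sharp_eq_zero [CharZero K] (hs : Dual K V →ₗ[K] V)
    (κ : V →ₗ[K] V →ₗ[K] V) (hκ : ∀ v v', κ v v' = κ v' v)
    (hskew : ∀ x (α β : Dual K V), α (κ x (hs β)) + β (κ x (hs α)) = 0) (α β : Dual K V) :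
    κ (hs α) (hs β) = 0 :=
  (forall_dual_apply_eq_zero_iff K _).mp fun γ =>
    eq_zero_of_symm_of_antisymm (fun a b c : Dual K V => c (κ (hs a) (hs b)))
      (fun a b c => by rw [hκ]) (fun a b c => eq_neg_of_add_eq_zero_left (hskew _ _ _)) α β γ

theorem range_sharp_eq {W : Submodule K V} {h : Dual K V →ₗ[K] Dual K V →ₗ[K] K}
    (hh_rad : ∀ α : Dual K V, (∀ α' : Dual K V, h α α' = 0) ↔ α ∈ W.dualAnnihilator)
    {hs : Dual K V →ₗ[K] V} (hhs : ∀ α β : Dual K V, β (hs α) = h β α) :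
    LinearMap.range hs = W := by
  rw [← Subspace.dualAnnihilator_inj, ← LinearMap.ker_dualMap_eq_dualAnnihilator_range]
  ext β
  simp [← hh_rad, LinearMap.ext_iff, hhs]

theorem dualAnnihilator_le_range [FiniteDimensional K V] (B : V →ₗ[K] Dual K V)
    (hB : ∀ v v', B v v' = B v' v) {W : Submodule K V} (hW : LinearMap.ker B ≤ W) :
    W.dualAnnihilator ≤ LinearMap.range B :=
  calc W.dualAnnihilator ≤ (LinearMap.ker B).dualAnnihilator := Submodule.dualAnnihilator_anti hW
    _ = LinearMap.range B.dualMap := B.range_dualMap_eq_dualAnnihilator_ker.symm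
    _ ≤ LinearMap.range B := by
      rintro _ ⟨φ, rfl⟩
      obtain ⟨v, rfl⟩ := (evalEquiv K V).surjective φ
      exact ⟨v, LinearMap.ext fun v' => by simp [hB v v']⟩

end

section

variable {V : Type*} [AddCommGroup V] [Module ℝ V]

theorem InG.apply_sharp_add_apply_sharp {η : V →ₗ[ℝ] V →ₗ[ℝ] ℝ}
    {h : Dual ℝ V →ₗ[ℝ] Dual ℝ V →ₗ[ℝ] ℝ} {X : V →ₗ[ℝ] V} (hX : InG η h X)
    {hs : Dual ℝ V →ₗ[ℝ] V} (hhs : ∀ α β : Dual ℝ V, β (hs α) = h β α)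
    (hh_symm : ∀ α α' : Dual ℝ V, h α α' = h α' α) (α β : Dual ℝ V) :
    α (X (hs β)) + β (X (hs α)) = 0 := by
  have := hX.2 α β
  rwa [hh_symm α, ← hhs, ← hhs] at this

theorem apply_eq_half_add_of_apply_proj_proj_eq_zero (c : V →ₗ[ℝ] V →ₗ[ℝ] ℝ)
    (hc : ∀ a b, c a b = c b a) (P : V →ₗ[ℝ] V) (hP : ∀ a b, c (P a) (P b) = 0) (a b : V) :
    c a b = 2⁻¹ * (c a (b - P b) + c (b - P b) (P a))
      + 2⁻¹ * (c b (a - P a) + c (a - P a) (P b)) := by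
  simp only [map_sub, LinearMap.sub_apply]
  linarith [hc b a, hc (P b) (P a), hP a b]

noncomputable def sharpContraction (κ : V →ₗ[ℝ] V →ₗ[ℝ] V) (P : V →ₗ[ℝ] V)
    (σ : V →ₗ[ℝ] Dual ℝ V) (ρ : Dual ℝ V →ₗ[ℝ] V) : V →ₗ[ℝ] V →ₗ[ℝ] V :=
  LinearMap.mk₂ ℝ (fun v w => ρ (σ w ∘ₗ κ v ∘ₗ (LinearMap.id - P)))
    (fun _ _ _ => by simp [LinearMap.add_comp, LinearMap.comp_add])
    (fun _ _ _ => by simp [LinearMap.smul_comp, LinearMap.comp_smul])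
    (fun _ _ _ => by simp [LinearMap.add_comp])
    (fun _ _ _ => by simp [LinearMap.smul_comp])

noncomputable def phiPreimage (κ : V →ₗ[ℝ] V →ₗ[ℝ] V) (P : V →ₗ[ℝ] V)
    (σ : V →ₗ[ℝ] Dual ℝ V) (ρ : Dual ℝ V →ₗ[ℝ] V) : V →ₗ[ℝ] V →ₗ[ℝ] V :=
  (2⁻¹ : ℝ) • ((sharpContraction κ P σ ρ).compl₂ P - ((sharpContraction κ P σ ρ).compl₂ P).flip)

theorem phiPreimage_apply_self (κ : V →ₗ[ℝ] V →ₗ[ℝ] V) (P : V →ₗ[ℝ] V)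
    (σ : V →ₗ[ℝ] Dual ℝ V) (ρ : Dual ℝ V →ₗ[ℝ] V) (v : V) : phiPreimage κ P σ ρ v v = 0 := by
  simp [phiPreimage]

section Construction

variable {W : Submodule ℝ V} {η : V →ₗ[ℝ] V →ₗ[ℝ] ℝ} {hs : Dual ℝ V →ₗ[ℝ] V}
  {κ : V →ₗ[ℝ] V →ₗ[ℝ] V} {P : V →ₗ[ℝ] V} {σ : V →ₗ[ℝ] Dual ℝ V} {ρ : Dual ℝ V →ₗ[ℝ] V}

theorem apply_sharpContraction (hρ : ∀ ℓ ∈ W.dualAnnihilator, η (ρ ℓ) = ℓ)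
    (hP : ∀ w ∈ W, P w = w) (v w v' : V) :
    η (sharpContraction κ P σ ρ v w) v' = σ w (κ v (v' - P v')) := by
  rw [sharpContraction, LinearMap.mk₂_apply, hρ]
  · simp
  · rw [Submodule.mem_dualAnnihilator]
    intro w' hw'
    simp [hP w' hw']

theorem apply_phiPreimage_sharp (hρ : ∀ ℓ ∈ W.dualAnnihilator, η (ρ ℓ) = ℓ)
    (hP : ∀ w ∈ W, P w = w) (hPW : ∀ v, P v ∈ W) (hσ : ∀ w ∈ W, hs (σ w) = w)
    (hsW : LinearMap.range hs = W) (hs_symm : ∀ α β : Dual ℝ V, α (hs β) = β (hs α))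
    (hκsym : ∀ v v', κ v v' = κ v' v) (hκW : ∀ v v', κ v v' ∈ W)
    (hκskew : ∀ x (α β : Dual ℝ V), α (κ x (hs β)) + β (κ x (hs α)) = 0) (a b : V)
    (α : Dual ℝ V) :
    η (phiPreimage κ P σ ρ a (hs α)) b
      = 2⁻¹ * (α (κ a (b - P b)) + α (κ (b - P b) (P a))) := by
  have hsα : hs α ∈ W := hsW ▸ LinearMap.mem_range_self hs α
  have hσ_sharp : σ (hs α) (κ a (b - P b)) = α (κ a (b - P b)) := by
    obtain ⟨β, hβ⟩ : κ a (b - P b) ∈ LinearMap.range hs := hsW ▸ hκW _ _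
    rw [← hβ, hs_symm, hσ _ hsα, hs_symm]
  have hσ_proj : σ (P a) (κ (hs α) (b - P b)) = -α (κ (b - P b) (P a)) := by
    have := hκskew (b - P b) (σ (P a)) α
    rw [hσ _ (hPW a)] at this
    rw [hκsym]
    linarith
  simp only [phiPreimage, LinearMap.smul_apply, LinearMap.sub_apply, LinearMap.compl₂_apply,
    LinearMap.flip_apply, hP _ hsα]
  rw [map_smul, map_sub, LinearMap.smul_apply, LinearMap.sub_apply, apply_sharpContraction hρ hP,
    apply_sharpContraction hρ hP, hσ_sharp, hσ_proj, smul_eq_mul, sub_neg_eq_add]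

end Construction

end

/-- `im φ = ker ∂`: every `𝔤`-valued `κ` with `∂κ = 0` is of the form
`φ_T` for some alternating bilinear `T : V × V → V`, i.e. `α(κ(v)v') =
η(T(v, h♯α), v') + η(T(v', h♯α), v)` for all `α, v, v'`. -/
theorem ker_spencer_in_image_of_phi
    {V : Type*} [AddCommGroup V] [Module ℝ V] [FiniteDimensional ℝ V]
    (W : Submodule ℝ V)
    (η : V →ₗ[ℝ] V →ₗ[ℝ] ℝ)
    (hη_symm : ∀ v v' : V, η v v' = η v' v)
    (hη_rad : ∀ v : V, (∀ v' : V, η v v' = 0) ↔ v ∈ W)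
    (h : Module.Dual ℝ V →ₗ[ℝ] Module.Dual ℝ V →ₗ[ℝ] ℝ)
    (hh_symm : ∀ α α' : Module.Dual ℝ V, h α α' = h α' α)
    (hh_rad : ∀ α : Module.Dual ℝ V,
      (∀ α' : Module.Dual ℝ V, h α α' = 0) ↔ α ∈ W.dualAnnihilator)
    (hs : Module.Dual ℝ V →ₗ[ℝ] V)
    (hhs : ∀ α β : Module.Dual ℝ V, β (hs α) = h β α)
    (κ : V →ₗ[ℝ] V →ₗ[ℝ] V)
    (hκg : ∀ v : V, InG η h (κ v))
    (hκsym : ∀ v v' : V, κ v v' = κ v' v) :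
    ∃ T : V →ₗ[ℝ] V →ₗ[ℝ] V, (∀ v : V, T v v = 0) ∧
      ∀ v v' : V, ∀ α : Module.Dual ℝ V,
        α (κ v v') = η (T v (hs α)) v' + η (T v' (hs α)) v := by
  have hsW : LinearMap.range hs = W := range_sharp_eq hh_rad hhs
  have hs_symm (α β : Dual ℝ V) : α (hs β) = β (hs α) := by rw [hhs, hhs, hh_symm]
  have hκskew (x : V) := (hκg x).apply_sharp_add_apply_sharp hhs hh_symm
  have hκW (v v' : V) : κ v v' ∈ W :=
    (hη_rad _).mp (apply_apply_eq_zero_of_skew η hη_symm κ hκsym (fun x => (hκg x).1) v v')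
  obtain ⟨σ, hσ⟩ := hs.exists_rightInverseOn_range
  rw [hsW] at hσ
  obtain ⟨ρ, hρ⟩ := η.exists_rightInverseOn_range
  have hρW : ∀ ℓ ∈ W.dualAnnihilator, η (ρ ℓ) = ℓ := fun ℓ hℓ =>
    hρ ℓ (dualAnnihilator_le_range η hη_symm
      (fun v hv => (hη_rad v).mp fun v' => by rw [LinearMap.mem_ker.mp hv]; rfl) hℓ)
  obtain ⟨r, hr⟩ := W.subtype.exists_leftInverse_of_injective W.ker_subtype
  set P := W.subtype ∘ₗ r
  have hPW (v : V) : P v ∈ W := (r v).2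
  have hP (w : V) (hw : w ∈ W) : P w = w :=
    congr_arg Subtype.val (LinearMap.congr_fun hr ⟨w, hw⟩)
  have hκP (α : Dual ℝ V) (a b : V) : α (κ (P a) (P b)) = 0 := by
    rw [← hσ _ (hPW a), ← hσ _ (hPW b), apply_sharp_apply_sharp_eq_zero hs κ hκsym hκskew, map_zero]
  refine ⟨phiPreimage κ P σ ρ, phiPreimage_apply_self κ P σ ρ, fun v v' α => ?_⟩
  rw [apply_phiPreimage_sharp hρW hP hPW hσ hsW hs_symm hκsym hκW hκskew,
    apply_phiPreimage_sharp hρW hP hPW hσ hsW hs_symm hκsym hκW hκskew]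
  simpa using apply_eq_half_add_of_apply_proj_proj_eq_zero (κ.compr₂ α)
    (fun a b => by simp [hκsym a b]) P (fun a b => by simpa using hκP α a b) v v'
end

section
/- (Characterization of the image of the Spencer differential: im ∂ = ker φ.) For an alternating bilinear map T : V × V → V, the following are equivalent: (i) there exists a linear map κ : V → End(V) with κ(v) ∈ 𝔤 for all v ∈ V and ∂κ = T, i.e. κ(v)v' − κ(v')v = T(v, v') for all v, v' ∈ V; (ii) η(T(v, w), v') + η(T(v', w), v) = 0 for all v, v' ∈ V and all w ∈ W. -/
open Module LinearMap Submodule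

section

variable {K : Type*} [Field K]

theorem exists_skew_sub_swap_eq [NeZero (2 : K)] {M : Type*} [AddCommGroup M] [Module K M]
    [FiniteDimensional K M] {b : LinearMap.BilinForm K M} (hb : b.Nondegenerate)
    {R : M →ₗ[K] M →ₗ[K] M} (hR : R.IsAlt) :
    ∃ D : M →ₗ[K] M →ₗ[K] M,
      (∀ x y z, b (D x y) z + b (D x z) y = 0) ∧ ∀ x y, D x y - D y x = R x y := by
  let e := (b.toDual hb).symm.toLinearMap
  let D : M →ₗ[K] M →ₗ[K] M := (2⁻¹ : K) • ((R.compr₂ b).compr₂ e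
    - ((llcomp K M M K).compl₁₂ b.flip R).compr₂ e
    + ((llcomp K M M K).compl₁₂ b.flip R.flip).flip.compr₂ e)
  have hkoszul : ∀ x y z, b (D x y) z = 2⁻¹ * (b (R x y) z - b (R y z) x + b (R z x) y) := by
    intro x y z
    simp [D, e, mul_add, mul_sub]
  have hR_swap : ∀ x y z, b (R x y) z + b (R y x) z = 0 := fun x y z => by
    rw [← hR.neg, map_neg, LinearMap.neg_apply, neg_add_cancel]
  refine ⟨D, fun x y z => ?_, fun x y => sub_eq_zero.mp (hb.1 _ fun z => ?_)⟩
  · rw [hkoszul, hkoszul]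
    linear_combination 2⁻¹ * (hR_swap x y z - hR_swap y z x + hR_swap z x y)
  · simp only [map_sub, LinearMap.sub_apply, hkoszul]
    field_simp
    linear_combination - hR_swap x y z - hR_swap y z x + hR_swap z x y

section Radical

variable {V : Type*} [AddCommGroup V] [Module K V] {W : Submodule K V} {η : V →ₗ[K] V →ₗ[K] K}
  {T : V →ₗ[K] V →ₗ[K] V}

/-- The condition `T ∈ ker φ` of the paper. -/
def IsSkewAlong (η : V →ₗ[K] V →ₗ[K] K) (W : Submodule K V) (T : V →ₗ[K] V →ₗ[K] V) : Prop :=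
  ∀ v v' : V, ∀ w : V, w ∈ W → η (T v w) v' + η (T v' w) v = 0

theorem isSkewAlong_of_sub_swap_eq (hη_symm : ∀ x y, η x y = η y x)
    (hη_W : ∀ w ∈ W, ∀ y, η w y = 0) {κ : V →ₗ[K] V →ₗ[K] V}
    (hκ : ∀ v x y, η (κ v x) y + η x (κ v y) = 0) (hκT : ∀ v v', κ v v' - κ v' v = T v v') :
    IsSkewAlong η W T := by
  intro v v' w hw
  have hκw : ∀ u u', η (κ u w) u' = 0 := fun u u' => by
    simpa [hη_W w hw] using hκ u w u'
  rw [← hκT, ← hκT, map_sub, map_sub, LinearMap.sub_apply, LinearMap.sub_apply, hκw, hκw,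
    hη_symm (κ w v')]
  linear_combination -hκ w v v'

theorem IsSkewAlong.apply_mem (hη_symm : ∀ x y, η x y = η y x)
    (hη_rad : ∀ v, (∀ v', η v v' = 0) ↔ v ∈ W) (hT : IsSkewAlong η W T) {x y : V}
    (hx : x ∈ W) (hy : y ∈ W) : T x y ∈ W :=
  (hη_rad _).1 fun v' => by
    simpa [hη_symm _ x, (hη_rad x).2 hx] using hT x v' y hy

theorem nondegenerate_domRestrict_of_isCompl (hη_symm : ∀ x y, η x y = η y x)
    (hη_rad : ∀ v, (∀ v', η v v' = 0) ↔ v ∈ W) {U : Submodule K V} (hU : IsCompl W U) :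
    (η.domRestrict₁₂ U U).Nondegenerate := by
  refine nondegenerate_restrict_of_disjoint_orthogonal (fun x y h => by rwa [hη_symm]) ?_
  rw [disjoint_iff_inf_le]
  rintro x ⟨hxU, hx⟩
  have hxW : x ∈ W := (hη_rad x).1 fun v' => by
    rw [← projection_add_projection_eq_self hU v', map_add, hη_symm x, hη_symm x,
      hx _ (projection_apply_mem _ _), (hη_rad _).2 (projection_apply_mem _ _), zero_add]
  exact (mem_bot K).2 (disjoint_def.mp hU.disjoint x hxW hxU)

variable {U : Submodule K V} (hU : IsCompl W U)

theorem apply_projection_eq_of_radical (hη_symm : ∀ x y, η x y = η y x)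
    (hη_W : ∀ w ∈ W, ∀ y, η w y = 0) (z y : V) : η z (U.projection W hU.symm y) = η z y := by
  conv_rhs => rw [← projection_add_projection_eq_self hU y]
  rw [map_add, hη_symm z (W.projection U hU y), hη_W _ (projection_apply_mem _ _), zero_add]

noncomputable def spencerLift (T : V →ₗ[K] V →ₗ[K] V) (A : W →ₗ[K] W →ₗ[K] W)
    (D : U →ₗ[K] U →ₗ[K] U) : V →ₗ[K] V →ₗ[K] V :=
  (A.compl₁₂ (W.projectionOnto U hU) (W.projectionOnto U hU)).compr₂ W.subtype
    + T.compl₁₂ (W.projection U hU) (U.projection W hU.symm)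
    + (D.compl₁₂ (U.projectionOnto W hU.symm) (U.projectionOnto W hU.symm)).compr₂ U.subtype
    + (2⁻¹ : K) • (T.compl₁₂ (U.projection W hU.symm) (U.projection W hU.symm)).compr₂
      (W.projection U hU)

variable {A : W →ₗ[K] W →ₗ[K] W} {D : U →ₗ[K] U →ₗ[K] U}

theorem spencerLift_apply (v v' : V) :
    spencerLift hU T A D v v' = A (W.projectionOnto U hU v) (W.projectionOnto U hU v')
      + T (W.projection U hU v) (U.projection W hU.symm v')
      + D (U.projectionOnto W hU.symm v) (U.projectionOnto W hU.symm v')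
      + (2⁻¹ : K) • W.projection U hU (T (U.projection W hU.symm v) (U.projection W hU.symm v')) :=
  rfl

theorem spencerLift_apply_of_mem (v : V) (w : W) :
    spencerLift hU T A D v w = A (W.projectionOnto U hU v) w := by
  simp [spencerLift_apply, projection_apply_of_mem_right hU.symm w.2,
    projectionOnto_apply_of_mem_right hU.symm w.2]

theorem spencerLift_sub_swap [NeZero (2 : K)] (hT : T.IsAlt)
    (hTW : ∀ x ∈ W, ∀ y ∈ W, T x y ∈ W)
    (hA : ∀ x y, A x y - A y x = W.projectionOnto U hU (T x y))
    (hD : ∀ x y, D x y - D y x = U.projectionOnto W hU.symm (T x y)) (v v' : V) :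
    spencerLift hU T A D v v' - spencerLift hU T A D v' v = T v v' := by
  rw [spencerLift_apply, spencerLift_apply]
  set P := W.projection U hU
  set Q := U.projection W hU.symm
  have hPQ : ∀ x, P x + Q x = x := projection_add_projection_eq_self hU
  have hAv : (A (W.projectionOnto U hU v) (W.projectionOnto U hU v') : V)
      - A (W.projectionOnto U hU v') (W.projectionOnto U hU v) = T (P v) (P v') := by
    rw [← Submodule.coe_sub, hA, coe_projectionOnto_apply]
    exact projection_apply_of_mem_left hU
      (hTW _ (projection_apply_mem _ _) _ (projection_apply_mem _ _))
  have hDv : (D (U.projectionOnto W hU.symm v) (U.projectionOnto W hU.symm v') : V)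
      - D (U.projectionOnto W hU.symm v') (U.projectionOnto W hU.symm v) = Q (T (Q v) (Q v')) := by
    rw [← Submodule.coe_sub, hD, coe_projectionOnto_apply]
    rfl
  have hsplit : T v v' = T (P v) (P v') + T (P v) (Q v') + T (Q v) (P v') + T (Q v) (Q v') := by
    conv_lhs => rw [← hPQ v, ← hPQ v']
    simp only [map_add, LinearMap.add_apply]
    abel
  have h2 : (2⁻¹ : K) + 2⁻¹ = 1 := by rw [← two_mul, mul_inv_cancel₀ two_ne_zero]
  rw [hsplit, ← hT.neg (Q v) (P v'), ← hT.neg (Q v) (Q v'), map_neg]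
  linear_combination (norm := module)
    hAv + hDv + hPQ (T (Q v) (Q v')) + h2 • P (T (Q v) (Q v'))

theorem spencerLift_skew (hη_symm : ∀ x y, η x y = η y x) (hη_W : ∀ w ∈ W, ∀ y, η w y = 0)
    (hT : T.IsAlt) (hTη : IsSkewAlong η W T)
    (hD : ∀ x y z : U, η (D x y) z + η (D x z) y = 0) (v x y : V) :
    η (spencerLift hU T A D v x) y + η x (spencerLift hU T A D v y) = 0 := by
  have hproj := apply_projection_eq_of_radical hU hη_symm hη_W
  have hexpand : ∀ x y, η (spencerLift hU T A D v x) y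
      = η (T (W.projection U hU v) (U.projection W hU.symm x)) (U.projection W hU.symm y)
        + η (D (U.projectionOnto W hU.symm v) (U.projectionOnto W hU.symm x))
          (U.projection W hU.symm y) := by
    intro x y
    simp only [spencerLift_apply, map_add, map_smul, LinearMap.add_apply, LinearMap.smul_apply,
      hη_W _ (A _ _).2, hη_W _ (projection_apply_mem _ _), hproj, smul_eq_mul, mul_zero, zero_add,
      add_zero]
  rw [hη_symm x, hexpand, hexpand, ← hT.neg (U.projection W hU.symm x),
    ← hT.neg (U.projection W hU.symm y)]
  have hDv := hD (U.projectionOnto W hU.symm v) (U.projectionOnto W hU.symm x)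
    (U.projectionOnto W hU.symm y)
  have hTv := hTη (U.projection W hU.symm x) (U.projection W hU.symm y) _
    (projection_apply_mem hU v)
  simp only [coe_projectionOnto_apply, map_neg, LinearMap.neg_apply] at hDv ⊢
  linear_combination hDv - hTv

end Radical

section DualForm

variable {V : Type*} [AddCommGroup V] [Module K V] {W : Submodule K V}
  {h : Dual K V →ₗ[K] Dual K V →ₗ[K] K}

theorem exists_sharp_of_dualAnnihilator [FiniteDimensional K V]
    (hh_symm : ∀ α α', h α α' = h α' α)
    (hh_rad : ∀ α, (∀ α', h α α' = 0) ↔ α ∈ W.dualAnnihilator) :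
    ∃ H : Dual K V →ₗ[K] W, (∀ α α', α (H α') = h α α') ∧ LinearMap.ker H = W.dualAnnihilator ∧
      Function.Surjective H := by
  let H₀ : Dual K V →ₗ[K] V := (evalEquiv K V).symm.toLinearMap ∘ₗ h.flip
  have hH₀ : ∀ α α', α (H₀ α') = h α α' := fun α α' => apply_evalEquiv_symm_apply K V α _
  have hH₀W : ∀ α', H₀ α' ∈ W := fun α' => by
    rw [← Subspace.dualAnnihilator_dualCoannihilator_eq (W := W), mem_dualCoannihilator]
    intro α hα
    rw [hH₀, (hh_rad α).2 hα]
  let H := H₀.codRestrict W hH₀W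
  have hker : LinearMap.ker H = W.dualAnnihilator := by
    ext α
    rw [mem_ker, ← hh_rad, ← Submodule.coe_eq_zero, ← forall_dual_apply_eq_zero_iff K]
    simp only [H, codRestrict_apply, hH₀, hh_symm _ α]
  refine ⟨H, hH₀, hker, range_eq_top.1 (eq_top_of_finrank_eq ?_)⟩
  have hrank := finrank_range_add_finrank_ker H
  rw [hker, Subspace.dual_finrank_eq, ← Subspace.finrank_add_finrank_dualAnnihilator_eq W] at hrank
  omega

theorem exists_bilinForm_apply_sharp [FiniteDimensional K V] {H : Dual K V →ₗ[K] W}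
    (hH_ker : LinearMap.ker H = W.dualAnnihilator) (hH : Function.Surjective H) :
    ∃ g : LinearMap.BilinForm K W, g.Nondegenerate ∧ ∀ α (y : W), g y (H α) = α y := by
  obtain ⟨s, hs⟩ := H.exists_rightInverse_of_surjective (range_eq_top.2 hH)
  let g := (W.dualRestrict ∘ₗ s).flip
  have hgH : ∀ α (y : W), g y (H α) = α y := by
    intro α y
    have hα : s (H α) - α ∈ W.dualAnnihilator := by
      rw [← hH_ker, mem_ker, map_sub, ← comp_apply H s, hs, id_apply, sub_self]
    rw [mem_dualAnnihilator] at hα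
    simpa [g, sub_eq_zero] using hα y y.2
  refine ⟨g, .ofSeparatingLeft fun y hy => ?_, hgH⟩
  rw [← Submodule.coe_eq_zero, ← forall_dual_apply_eq_zero_iff K]
  exact fun α => hgH α y ▸ hy (H α)

theorem dual_skew_of_skew_restrict (hh_symm : ∀ α α', h α α' = h α' α)
    {H : Dual K V →ₗ[K] W} (hH : ∀ α α', α (H α') = h α α') {g : LinearMap.BilinForm K W}
    (hgH : ∀ α (y : W), g y (H α) = α y) {X : V →ₗ[K] V} {A : W →ₗ[K] W}
    (hXA : ∀ w : W, X w = A w) (hA : ∀ y z, g (A y) z + g (A z) y = 0) (α α' : Dual K V) :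
    h (α ∘ₗ X) α' + h α (α' ∘ₗ X) = 0 := by
  rw [hh_symm α, ← hH, ← hH, comp_apply, comp_apply, hXA, hXA, ← hgH, ← hgH]
  exact hA (H α') (H α)

end DualForm

end

/-- Characterisation of the image of the Spencer differential:
an alternating bilinear `T` is of the form `∂κ` for a `𝔤`-valued `κ` if and only if
`η(T(v, w), v') + η(T(v', w), v) = 0` for all `v, v' ∈ V`, `w ∈ W`. -/
theorem spencer_image_characterisation
    {V : Type*} [AddCommGroup V] [Module ℝ V] [FiniteDimensional ℝ V]
    (W : Submodule ℝ V)
    (η : V →ₗ[ℝ] V →ₗ[ℝ] ℝ)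
    (hη_symm : ∀ v v' : V, η v v' = η v' v)
    (hη_rad : ∀ v : V, (∀ v' : V, η v v' = 0) ↔ v ∈ W)
    (h : Module.Dual ℝ V →ₗ[ℝ] Module.Dual ℝ V →ₗ[ℝ] ℝ)
    (hh_symm : ∀ α α' : Module.Dual ℝ V, h α α' = h α' α)
    (hh_rad : ∀ α : Module.Dual ℝ V,
      (∀ α' : Module.Dual ℝ V, h α α' = 0) ↔ α ∈ W.dualAnnihilator)
    (T : V →ₗ[ℝ] V →ₗ[ℝ] V)
    (hTalt : ∀ v : V, T v v = 0) :
    (∃ κ : V →ₗ[ℝ] V →ₗ[ℝ] V, (∀ v : V, InG η h (κ v)) ∧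
        ∀ v v' : V, κ v v' - κ v' v = T v v') ↔
    (∀ v v' : V, ∀ w : V, w ∈ W → η (T v w) v' + η (T v' w) v = 0) := by
  have hη_W : ∀ w ∈ W, ∀ y, η w y = 0 := fun w hw => (hη_rad w).2 hw
  refine ⟨fun ⟨κ, hκ, hκT⟩ => isSkewAlong_of_sub_swap_eq hη_symm hη_W (fun v => (hκ v).1) hκT,
    fun (hTη : IsSkewAlong η W T) => ?_⟩
  obtain ⟨U, hU⟩ := W.exists_isCompl
  have hT_restrict : ∀ (P : Submodule ℝ V) (π : V →ₗ[ℝ] P),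
      ((T.compl₁₂ P.subtype P.subtype).compr₂ π).IsAlt := fun P π x => by simp [hTalt x]
  obtain ⟨H, hH, hH_ker, hH_surj⟩ := exists_sharp_of_dualAnnihilator hh_symm hh_rad
  obtain ⟨g, hg, hgH⟩ := exists_bilinForm_apply_sharp hH_ker hH_surj
  obtain ⟨A, hA_skew, hA⟩ := exists_skew_sub_swap_eq hg (hT_restrict W (W.projectionOnto U hU))
  obtain ⟨D, hD_skew, hD⟩ := exists_skew_sub_swap_eq
    (nondegenerate_domRestrict_of_isCompl hη_symm hη_rad hU)
    (hT_restrict U (U.projectionOnto W hU.symm))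
  refine ⟨spencerLift hU T A D, fun v => ⟨spencerLift_skew hU hη_symm hη_W hTalt hTη hD_skew v,
    dual_skew_of_skew_restrict hh_symm hH hgH (spencerLift_apply_of_mem hU v) (hA_skew _)⟩,
    spencerLift_sub_swap hU hTalt (fun x hx y hy => hTη.apply_mem hη_symm hη_rad hx hy) hA hD⟩
end

section
/- For an alternating bilinear map T : V × V → V, one has φ_T(w, v) = 0 for all w ∈ W and v ∈ V if and only if T(w, w') ∈ W for all w, w' ∈ W (equivalently, if and only if η(T(w, w'), v) = 0 for all w, w' ∈ W and v ∈ V). -/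
/-- For an alternating bilinear `T`, `φ_T(w, ·) = 0` for all `w ∈ W`
if and only if `T(w, w') ∈ W` for all `w, w' ∈ W` (equivalently, iff
`η(T(w, w'), v) = 0` for all `w, w' ∈ W`, `v ∈ V`). -/
theorem phi_vanishes_on_W_iff
    {V : Type*} [AddCommGroup V] [Module ℝ V] [FiniteDimensional ℝ V]
    (W : Submodule ℝ V)
    (η : V →ₗ[ℝ] V →ₗ[ℝ] ℝ)
    (hη_symm : ∀ v v' : V, η v v' = η v' v)
    (hη_rad : ∀ v : V, (∀ v' : V, η v v' = 0) ↔ v ∈ W)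
    (h : Module.Dual ℝ V →ₗ[ℝ] Module.Dual ℝ V →ₗ[ℝ] ℝ)
    (hh_symm : ∀ α α' : Module.Dual ℝ V, h α α' = h α' α)
    (hh_rad : ∀ α : Module.Dual ℝ V,
      (∀ α' : Module.Dual ℝ V, h α α' = 0) ↔ α ∈ W.dualAnnihilator)
    (hs : Module.Dual ℝ V →ₗ[ℝ] V)
    (hhs : ∀ α β : Module.Dual ℝ V, β (hs α) = h β α)
    (T : V →ₗ[ℝ] V →ₗ[ℝ] V)
    (hTalt : ∀ v : V, T v v = 0)
    (φ : V → V → V)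
    (hφ : ∀ v v' : V, ∀ α : Module.Dual ℝ V,
      α (φ v v') = η (T v (hs α)) v' + η (T v' (hs α)) v) :
    ((∀ w : V, w ∈ W → ∀ v : V, φ w v = 0) ↔
      (∀ w : V, w ∈ W → ∀ w' : V, w' ∈ W → T w w' ∈ W)) ∧
    ((∀ w : V, w ∈ W → ∀ w' : V, w' ∈ W → T w w' ∈ W) ↔
      (∀ w : V, w ∈ W → ∀ w' : V, w' ∈ W → ∀ v : V, η (T w w') v = 0)) := by
  -- hs lands in W
  have hsW : ∀ α : Module.Dual ℝ V, hs α ∈ W := by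
    intro α
    have : hs α ∈ W.dualAnnihilator.dualCoannihilator := by
      rw [Submodule.mem_dualCoannihilator]
      intro γ hγ
      rw [hhs]
      exact ((hh_rad γ).mpr hγ) α
    rwa [Subspace.dualAnnihilator_dualCoannihilator_eq] at this
  -- kernel of hs is the dual annihilator of W
  have hker : LinearMap.ker hs = W.dualAnnihilator := by
    ext α
    rw [LinearMap.mem_ker, ← hh_rad α]
    constructor
    · intro h0 α'
      rw [hh_symm, ← hhs, h0, map_zero]
    · intro h0
      rw [← Module.forall_dual_apply_eq_zero_iff ℝ (hs α)]
      intro β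
      rw [hhs, hh_symm]
      exact h0 β
  -- range of hs is W
  have hrange : LinearMap.range hs = W := by
    apply Submodule.eq_of_le_of_finrank_eq
    · rintro _ ⟨α, rfl⟩; exact hsW α
    · have h1 := LinearMap.finrank_range_add_finrank_ker hs
      have h2 := Subspace.finrank_add_finrank_dualCoannihilator_eq W.dualAnnihilator
      rw [Subspace.dualAnnihilator_dualCoannihilator_eq] at h2
      rw [hker, Subspace.dual_finrank_eq] at h1
      omega
  -- η vanishes when either argument is in W
  have hηW : ∀ w : V, w ∈ W → ∀ v : V, η w v = 0 := fun w hw v => (hη_rad w).mpr hw v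
  have hηW' : ∀ v w : V, w ∈ W → η v w = 0 := fun v w hw => by
    rw [hη_symm]; exact hηW w hw v
  refine ⟨?_, ?_⟩
  · constructor
    · intro hφ0 w hw w' hw'
      rw [← hη_rad]
      intro v
      have hex : ∃ α, hs α = w' := by rw [← hrange] at hw'; exact hw'
      obtain ⟨α, rfl⟩ := hex
      have h0 := hφ w v α
      rw [hφ0 w hw v, map_zero] at h0
      have h2 : η (T v (hs α)) w = 0 := hηW' _ w hw
      linarith
    · intro hT w hw v
      rw [← Module.forall_dual_apply_eq_zero_iff ℝ (φ w v)]
      intro α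
      rw [hφ w v α]
      have h1 : η (T w (hs α)) v = 0 := hηW _ (hT w hw (hs α) (hsW α)) v
      have h2 : η (T v (hs α)) w = 0 := hηW' _ w hw
      rw [h1, h2, add_zero]
  · constructor
    · intro hT w hw w' hw' v
      exact hηW _ (hT w hw w' hw') v
    · intro hT w hw w' hw'
      exact (hη_rad _).mp (hT w hw w' hw')
end

section
/- For an alternating bilinear map T : V × V → V, the following are equivalent: (i) there exists w̃ ∈ W such that φ_T(v, v') = η(v, v')·w̃ for all v, v' ∈ V; (ii) there exist w̃ ∈ W and β ∈ V* with h♯(β) = w̃ such that η(T(v, w), v') + η(T(v', w), v) = β(w)·η(v, v') for all v, v' ∈ V and all w ∈ W. (Since β(w) = γ(w̃, w) for the inner product γ on W with γ(h♯(α), h♯(α')) = h(α, α'), condition (ii) says η(T(v ∧ w), v') + η(T(v' ∧ w), v) = γ(w̃, w)·η(v, v') for some w̃ ∈ W.) -/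
/-- For an alternating bilinear `T`, `φ_T(v, v') = η(v, v')·wt` for
some `wt ∈ W` if and only if `η(T(v, w), v') + η(T(v', w), v) = γ(wt, w)·η(v, v')`
for some `wt ∈ W`, where `γ(wt, w) = β(w)` for any `β` with `h♯β = wt`. -/
theorem phi_trace_class_characterisation
    {V : Type*} [AddCommGroup V] [Module ℝ V] [FiniteDimensional ℝ V]
    (W : Submodule ℝ V)
    (η : V →ₗ[ℝ] V →ₗ[ℝ] ℝ)
    (hη_symm : ∀ v v' : V, η v v' = η v' v)
    (hη_rad : ∀ v : V, (∀ v' : V, η v v' = 0) ↔ v ∈ W)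
    (h : Module.Dual ℝ V →ₗ[ℝ] Module.Dual ℝ V →ₗ[ℝ] ℝ)
    (hh_symm : ∀ α α' : Module.Dual ℝ V, h α α' = h α' α)
    (hh_rad : ∀ α : Module.Dual ℝ V,
      (∀ α' : Module.Dual ℝ V, h α α' = 0) ↔ α ∈ W.dualAnnihilator)
    (hs : Module.Dual ℝ V →ₗ[ℝ] V)
    (hhs : ∀ α β : Module.Dual ℝ V, β (hs α) = h β α)
    (T : V →ₗ[ℝ] V →ₗ[ℝ] V)
    (hTalt : ∀ v : V, T v v = 0)
    (φ : V → V → V)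
    (hφ : ∀ v v' : V, ∀ α : Module.Dual ℝ V,
      α (φ v v') = η (T v (hs α)) v' + η (T v' (hs α)) v) :
    (∃ wt : V, wt ∈ W ∧ ∀ v v' : V, φ v v' = η v v' • wt) ↔
    (∃ wt : V, ∃ β : Module.Dual ℝ V, wt ∈ W ∧ hs β = wt ∧
      ∀ v v' : V, ∀ w : V, w ∈ W →
        η (T v w) v' + η (T v' w) v = β w * η v v') := by
  -- range hs ⊆ W
  have hrange : ∀ α : Module.Dual ℝ V, hs α ∈ W := by
    intro α
    rw [← (Subspace.forall_mem_dualAnnihilator_apply_eq_zero_iff W (hs α))]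
    intro γ hγ
    rw [hhs]
    exact (hh_rad γ).mpr hγ α
  -- ker hs = dualAnnihilator W
  have hker : LinearMap.ker hs = W.dualAnnihilator := by
    ext α
    simp only [LinearMap.mem_ker]
    constructor
    · intro h0
      rw [← hh_rad]
      intro α'
      rw [hh_symm, ← hhs, h0, map_zero]
    · intro hα
      have : ∀ β : Module.Dual ℝ V, β (hs α) = 0 := by
        intro β
        rw [hhs, ← hh_symm]
        exact (hh_rad α).mpr hα β
      exact (Module.forall_dual_apply_eq_zero_iff ℝ (hs α)).mp this
  -- range hs = W by dimension count
  have hrange_eq : LinearMap.range hs = W := by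
    apply Submodule.eq_of_le_of_finrank_eq
    · rintro _ ⟨α, rfl⟩; exact hrange α
    · have h1 := LinearMap.finrank_range_add_finrank_ker hs
      have h2 : Module.finrank ℝ W.dualAnnihilator
          = Module.finrank ℝ (V ⧸ W) :=
        ((Subspace.quotEquivAnnihilator W).symm.finrank_eq)
      have h3 := Submodule.finrank_quotient_add_finrank W
      have h4 : Module.finrank ℝ (Module.Dual ℝ V) = Module.finrank ℝ V :=
        Subspace.dual_finrank_eq
      rw [hker, h2] at h1
      omega
  constructor
  · rintro ⟨wt, hwt, hphi⟩
    obtain ⟨β, hβ⟩ : ∃ β, hs β = wt := by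
      rw [← hrange_eq] at hwt; exact hwt
    refine ⟨wt, β, hwt, hβ, ?_⟩
    intro v v' w hw
    obtain ⟨α, hα⟩ : ∃ α, hs α = w := by
      rw [← hrange_eq] at hw; exact hw
    have := hφ v v' α
    rw [hphi v v', map_smul, smul_eq_mul, hα] at this
    rw [← this, ← hα, hhs α β, ← hβ, hhs β α, hh_symm α β, mul_comm]
  · rintro ⟨wt, β, hwt, hβ, hid⟩
    refine ⟨wt, hwt, ?_⟩
    intro v v'
    rw [← sub_eq_zero, ← Module.forall_dual_apply_eq_zero_iff ℝ]
    intro α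
    rw [map_sub, sub_eq_zero, hφ v v' α, map_smul, smul_eq_mul,
      hid v v' (hs α) (hrange α), hhs, ← hβ, hhs, hh_symm, mul_comm]
end
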